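/- arXiv:2008.02876 — 4 statements merged into one kernel-verified Lean document; each statement's English description precedes it below -/
import Mathlib

section
/- For every real number a with 0 < a < 1/2 and all real numbers u ≠ v, one has ∫_ℝ (u−y)_+^{a−1} (v−y)_+^{a−1} dy = B(a, 1−2a) · |u−v|^{2a−1}. -/
/-!
With `c = v - u > 0`, the substitution `y = u - c x / (1 - x)` maps `(0, 1)` onto `(-∞, u)`, the
support of the integrand, and turns `(u - y)^(α-1) (v - y)^(β-1) dy` into
`c^(α+β-1) x^(α-1) (1 - x)^(-α-β) dx`, so the integral is Euler's Beta integral `B(α, 1 - α - β)`.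
-/

open MeasureTheory Set ProbabilityTheory

lemma integral_Ioo_rpow_mul_one_sub_rpow {p q : ℝ} (hp : 0 < p) (hq : 0 < q) :
    ∫ x in Ioo (0 : ℝ) 1, x ^ (p - 1) * (1 - x) ^ (q - 1) = beta p q := by
  have hcast : Complex.betaIntegral p q
      = ((∫ x in (0 : ℝ)..1, x ^ (p - 1) * (1 - x) ^ (q - 1) : ℝ) : ℂ) := by
    rw [Complex.betaIntegral, ← intervalIntegral.integral_ofReal]
    refine intervalIntegral.integral_congr fun x hx => ?_
    rw [uIcc_of_le zero_le_one] at hx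
    simp only [Complex.ofReal_mul, Complex.ofReal_cpow hx.1,
      Complex.ofReal_cpow (sub_nonneg.2 hx.2)]
    push_cast
    rfl
  rw [beta_eq_betaIntegralReal p q hp hq, hcast, Complex.ofReal_re,
    intervalIntegral.integral_of_le zero_le_one, integral_Ioc_eq_integral_Ioo]

section MoebiusSubstitution

variable {u c : ℝ}

lemma image_Ioo_sub_mul_div_one_sub (hc : 0 < c) :
    (fun x => u - c * x / (1 - x)) '' Ioo 0 1 = Iio u := by
  ext y
  constructor
  · rintro ⟨x, ⟨hx0, hx1⟩, rfl⟩
    have : 0 < c * x / (1 - x) := div_pos (mul_pos hc hx0) (sub_pos.2 hx1)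
    simp only [mem_Iio]
    linarith
  · intro hy
    have hy' : 0 < u - y := sub_pos.2 hy
    refine ⟨(u - y) / (c + (u - y)), ⟨by positivity, ?_⟩, ?_⟩
    · rw [div_lt_one (by positivity)]
      linarith
    · have : c + (u - y) ≠ 0 := by positivity
      field_simp [hc.ne']
      ring

lemma injOn_sub_mul_div_one_sub (hc : c ≠ 0) :
    InjOn (fun x => u - c * x / (1 - x)) {1}ᶜ := by
  intro x hx y hy hxy
  have hx' : 1 - x ≠ 0 := sub_ne_zero.2 (Ne.symm hx)
  have hy' : 1 - y ≠ 0 := sub_ne_zero.2 (Ne.symm hy)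
  have : c * x * (1 - y) = c * y * (1 - x) := by
    rw [← div_eq_div_iff hx' hy']
    simpa using hxy
  have : c * (x - y) = 0 := by linear_combination this
  simpa [hc, sub_eq_zero] using this

lemma hasDerivAt_sub_mul_div_one_sub {x : ℝ} (hx : x ≠ 1) :
    HasDerivAt (fun x => u - c * x / (1 - x)) (-(c / (1 - x) ^ 2)) x := by
  have hx' : 1 - x ≠ 0 := sub_ne_zero.2 (Ne.symm hx)
  have := (((hasDerivAt_id' x).const_mul c).div ((hasDerivAt_id' x).const_sub 1) hx').const_sub u
  refine this.congr_deriv ?_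
  field_simp
  ring

end MoebiusSubstitution

lemma abs_neg_div_sq_mul_max_sub_rpow {α β u c x : ℝ} (hc : 0 < c) (hx : x ∈ Ioo (0 : ℝ) 1) :
    |-(c / (1 - x) ^ 2)| * (max (u - (u - c * x / (1 - x))) 0 ^ (α - 1)
      * max (u + c - (u - c * x / (1 - x))) 0 ^ (β - 1))
      = c ^ (α + β - 1) * (x ^ (α - 1) * (1 - x) ^ (1 - α - β - 1)) := by
  obtain ⟨hx0, hx1⟩ := hx
  have hw : 0 < 1 - x := sub_pos.2 hx1
  have hleft : max (u - (u - c * x / (1 - x))) 0 = c * x / (1 - x) := by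
    rw [sub_sub_cancel, max_eq_left (by positivity)]
  have hright : max (u + c - (u - c * x / (1 - x))) 0 = c / (1 - x) := by
    rw [show u + c - (u - c * x / (1 - x)) = c / (1 - x) by field_simp; ring,
      max_eq_left (by positivity)]
  have hc_pow : c ^ (α + β - 1) = c ^ (α - 1) * c ^ (β - 1) * c := by
    rw [← Real.rpow_add hc, ← Real.rpow_add_one hc.ne']
    ring_nf
  have hw_pow :
      (1 - x) ^ (1 - α - β - 1) * ((1 - x) ^ (α - 1) * (1 - x) ^ (β - 1) * (1 - x) ^ 2) = 1 := by
    rw [← Real.rpow_natCast, ← Real.rpow_add hw, ← Real.rpow_add hw, ← Real.rpow_add hw]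
    ring_nf
    exact Real.rpow_zero _
  rw [hleft, hright, abs_neg, abs_of_pos (by positivity), Real.div_rpow (by positivity) hw.le,
    Real.mul_rpow hc.le hx0.le, Real.div_rpow hc.le hw.le, hc_pow]
  field_simp
  linear_combination -hw_pow

lemma integral_max_sub_rpow_mul_max_sub_rpow_of_lt {α β u v : ℝ} (hα : 0 < α) (hα₁ : α < 1)
    (hαβ : α + β < 1) (huv : u < v) :
    ∫ y, max (u - y) 0 ^ (α - 1) * max (v - y) 0 ^ (β - 1)
      = beta α (1 - α - β) * (v - u) ^ (α + β - 1) := by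
  obtain ⟨c, hc, rfl⟩ : ∃ c, 0 < c ∧ v = u + c := ⟨v - u, sub_pos.2 huv, by ring⟩
  have hsupport : ∀ y ∉ Iio u, max (u - y) 0 ^ (α - 1) * max (u + c - y) 0 ^ (β - 1) = 0 := by
    intro y hy
    rw [max_eq_right (sub_nonpos.2 (not_lt.1 hy)), Real.zero_rpow (by linarith), zero_mul]
  rw [← setIntegral_eq_integral_of_forall_compl_eq_zero hsupport,
    ← image_Ioo_sub_mul_div_one_sub hc,
    integral_image_eq_integral_abs_deriv_smul measurableSet_Ioo
      (fun x hx => (hasDerivAt_sub_mul_div_one_sub hx.2.ne).hasDerivWithinAt)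
      ((injOn_sub_mul_div_one_sub hc.ne').mono fun x hx => hx.2.ne)]
  simp only [smul_eq_mul]
  rw [setIntegral_congr_fun measurableSet_Ioo fun x hx => abs_neg_div_sq_mul_max_sub_rpow hc hx,
    integral_const_mul, integral_Ioo_rpow_mul_one_sub_rpow hα (by linarith), add_sub_cancel_left,
    mul_comm]

/-- Beta-type convolution identity: for `0 < a < 1/2` and `u ≠ v`,
`∫_ℝ (u−y)_+^(a−1) (v−y)_+^(a−1) dy = B(a, 1−2a) · |u−v|^(2a−1)`,
where `B(p,q) = Γ(p)Γ(q)/Γ(p+q)` and `(x)_+^c = (max x 0)^c` with `0^c = 0`. -/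
theorem beta_convolution_identity (a u v : ℝ) (ha : 0 < a) (ha' : a < 1/2) (huv : u ≠ v) :
    ∫ y : ℝ, (max (u - y) 0) ^ (a - 1) * (max (v - y) 0) ^ (a - 1)
      = (Real.Gamma a * Real.Gamma (1 - 2*a) / Real.Gamma (a + (1 - 2*a)))
        * |u - v| ^ (2*a - 1) := by
  change _ = beta a (1 - 2 * a) * _
  rw [show 1 - 2 * a = 1 - a - a by ring, show 2 * a - 1 = a + a - 1 by ring]
  rcases huv.lt_or_gt with h | h
  · rw [abs_sub_comm, abs_of_pos (sub_pos.2 h)]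
    exact integral_max_sub_rpow_mul_max_sub_rpow_of_lt ha (by linarith) (by linarith) h
  · conv_lhs => enter [2, y]; rw [mul_comm]
    rw [abs_of_pos (sub_pos.2 h)]
    exact integral_max_sub_rpow_mul_max_sub_rpow_of_lt ha (by linarith) (by linarith) h
end

section
/- Fix integers m, k, k' ≥ 1, H0 ∈ (1/2,1), t, t' ∈ ℝ, and a measurable function x : ℝ → [0,∞]. Let β_{j,q} (for 1 ≤ q < j ≤ k), β'_{j',q'} (for 1 ≤ q' < j' ≤ k') and γ_{j,j'} (for 1 ≤ j ≤ k, 1 ≤ j' ≤ k') be nonnegative integers such that for every j ∈ {1,…,k}: ∑_{q<j} β_{j,q} + ∑_{p>j} β_{p,j} + ∑_{j'=1}^{k'} γ_{j,j'} = m, and for every j' ∈ {1,…,k'}: ∑_{q'<j'} β'_{j',q'} + ∑_{p'>j'} β'_{p',j'} + ∑_{j=1}^{k} γ_{j,j'} = m. Set A(u,v) = ∫_{(−∞,u]} ∫_{(−∞,v]} x(u−a) x(v−b) |a−b|^{m(2H0−2)} db da, b = ∑_{j>q} β_{j,q}, b' = ∑_{j'>q'} β'_{j',q'}, and c = ∑_{j,j'}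 γ_{j,j'}. Then, as an inequality in [0,∞]: ∫_{(−∞,t]^k} ∫_{(−∞,t']^{k'}} ∏_{j=1}^k x(t−s_j) ∏_{j'=1}^{k'} x(t'−s'_{j'}) ∏_{q<j} |s_j−s_q|^{β_{j,q}(2H0−2)} ∏_{q'<j'} |s'_{j'}−s'_{q'}|^{β'_{j',q'}(2H0−2)} ∏_{j,j'} |s_j−s'_{j'}|^{γ_{j,j'}(2H0−2)} ds' ds ≤ A(t,t)^{b/m} · A(t',t')^{b'/m} · A(t,t')^{c/m}. -/
/-!
Put all `k + k'` variables on the nodes of one graph and give the edge `{i, i'}` the weight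
`θ = (its multiplicity β, β' or γ) / m`; the degree condition says that the weights at every
node sum to `1`. Splitting each node factor `x (τ - s)` (`τ = t` or `t'`) as a product of its
`θ`-powers over the edges at that node rewrites the integrand as `∏ₑ fₑ ^ θₑ`, where `f` of the
edge `{i, i'}` is `x (τᵢ - sᵢ) x (τᵢ' - sᵢ') |sᵢ - sᵢ'| ^ (m (2H0 - 2))`, whose double integral
is `A (τᵢ, τᵢ')`. Integrating out one variable at a time and applying Hölder's inequality in that
variable to the factors that depend on it (their exponents sum to `1`) gives Finner's inequality
`∫ ∏ₑ fₑ ^ θₑ ≤ ∏ₑ (∫ fₑ) ^ θₑ`.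
-/

open MeasureTheory Real Finset

/-- `A(u,v) = ∫_{(−∞,u]} ∫_{(−∞,v]} x(u−a) x(v−b) |a−b|^(m(2H0−2)) db da`, in `[0,∞]`. -/
noncomputable def pairIntegral (m : ℕ) (H0 : ℝ) (x : ℝ → ENNReal) (u v : ℝ) : ENNReal :=
  ∫⁻ a in Set.Iic u, ∫⁻ b in Set.Iic v,
    x (u - a) * x (v - b) * ENNReal.ofReal (|a - b| ^ ((m : ℝ) * (2*H0 - 2)))

open scoped ENNReal

theorem ENNReal.rpow_sum_of_nonneg {ι : Type*} {a : ℝ≥0∞} {s : Finset ι} {f : ι → ℝ}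
    (h : ∀ i ∈ s, 0 ≤ f i) : a ^ ∑ i ∈ s, f i = ∏ i ∈ s, a ^ f i := by
  induction s using Finset.cons_induction with
  | empty => simp
  | cons i s hi ih =>
    rw [forall_mem_cons] at h
    rw [sum_cons, prod_cons, ← ih h.2, ENNReal.rpow_add_of_nonneg _ _ h.1 (sum_nonneg h.2)]

theorem ENNReal.prod_rpow_natCast_div {ι : Type*} (a : ℝ≥0∞) (s : Finset ι) (n : ι → ℕ) (m : ℕ) :
    ∏ i ∈ s, a ^ ((n i : ℝ) / m) = a ^ (((∑ i ∈ s, n i : ℕ) : ℝ) / m) := by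
  rw [Nat.cast_sum, sum_div, ENNReal.rpow_sum_of_nonneg fun i _ => by positivity]

theorem ENNReal.ofReal_abs_rpow_mul_rpow_div {m : ℕ} (hm : m ≠ 0) (r c : ℝ) (n : ℕ) :
    ENNReal.ofReal (|r| ^ ((m : ℝ) * c)) ^ ((n : ℝ) / m)
      = ENNReal.ofReal (|r| ^ ((n : ℝ) * c)) := by
  rw [ENNReal.ofReal_rpow_of_nonneg (by positivity) (by positivity), ← Real.rpow_mul (abs_nonneg r)]
  congr 2
  field_simp

section Marginal

variable {δ : Type*} [DecidableEq δ] {X : δ → Type*} [∀ i, MeasurableSpace (X i)]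
  {μ : ∀ i, Measure (X i)}

theorem DependsOn.lmarginal {f : (∀ i, X i) → ℝ≥0∞} {s : Set δ} (hf : DependsOn f s)
    (t : Finset δ) : DependsOn (∫⋯∫⁻_t, f ∂μ) (s \ t) := by
  intro y z hyz
  refine lintegral_congr fun w => hf fun i hi => ?_
  simp only [Function.updateFinset_def]
  split_ifs with hit
  · rfl
  · exact hyz i ⟨hi, hit⟩

variable [∀ i, SigmaFinite (μ i)]

theorem lmarginal_pair {i j : δ} (hij : i ≠ j) {g : X i → X j → ℝ≥0∞}
    (hg : Measurable (Function.uncurry g)) (z : ∀ i, X i) :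
    (∫⋯∫⁻_{i, j}, (fun y => g (y i) (y j)) ∂μ) z = ∫⁻ a, ∫⁻ b, g a b ∂μ j ∂μ i := by
  have hmeas : Measurable fun y : ∀ i, X i => g (y i) (y j) :=
    hg.comp ((measurable_pi_apply i).prodMk (measurable_pi_apply j))
  rw [lmarginal_insert _ hmeas (by simpa using hij)]
  refine lintegral_congr fun a => ?_
  simp [lmarginal_singleton, Function.update_of_ne hij]

theorem lmarginal_prod_rpow_le {ε : Type*} (E : Finset ε) (S : ε → Finset δ)
    (f : ε → (∀ i, X i) → ℝ≥0∞) (hf : ∀ e ∈ E, Measurable (f e))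
    (hS : ∀ e ∈ E, DependsOn (f e) (S e)) (θ : ε → ℝ) (hθ : ∀ e ∈ E, 0 ≤ θ e)
    (A : Finset δ) (hA : ∀ i ∈ A, ∑ e ∈ E with i ∈ S e, θ e = 1) (z : ∀ i, X i) :
    (∫⋯∫⁻_A, (fun y => ∏ e ∈ E, f e y ^ θ e) ∂μ) z
      ≤ ∏ e ∈ E, (∫⋯∫⁻_(S e ∩ A), f e ∂μ) z ^ θ e := by
  induction A using Finset.induction generalizing z with
  | empty => simp
  | insert i A hi ih =>
    set g : ε → (∀ i, X i) → ℝ≥0∞ := fun e => ∫⋯∫⁻_(S e ∩ A), f e ∂μ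
    have hg_update : ∀ e ∈ E, Measurable fun a => g e (Function.update z i a) :=
      fun e he => ((hf e he).lmarginal μ).comp (measurable_update z)
    have hg_const : ∀ e ∈ E, i ∉ S e → ∀ a, g e (Function.update z i a) = g e z :=
      fun e he hie a => ((hS e he).lmarginal _).mono Set.sdiff_subset fun j hj =>
        Function.update_of_ne (ne_of_mem_of_not_mem hj hie) _ _
    have hnew : ∀ e ∈ E, (∫⋯∫⁻_(S e ∩ insert i A), f e ∂μ) z
        = if i ∈ S e then ∫⁻ a, g e (Function.update z i a) ∂μ i else g e z := by
      intro e he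
      split_ifs with hie
      · rw [inter_insert_of_mem hie, lmarginal_insert _ (hf e he) fun h => hi (mem_inter.1 h).2]
      · rw [inter_insert_of_notMem hie]
    have hFmeas : Measurable fun y => ∏ e ∈ E, f e y ^ θ e :=
      measurable_prod _ fun e he => (hf e he).pow_const _
    rw [lmarginal_insert _ hFmeas hi]
    calc ∫⁻ a, (∫⋯∫⁻_A, (fun y => ∏ e ∈ E, f e y ^ θ e) ∂μ) (Function.update z i a) ∂μ i
        ≤ ∫⁻ a, (∏ e ∈ E with i ∈ S e, g e (Function.update z i a) ^ θ e)
            * ∏ e ∈ E with i ∉ S e, g e z ^ θ e ∂μ i := by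
          refine lintegral_mono fun a =>
            (ih (fun j hj => hA j (mem_insert_of_mem hj)) _).trans_eq ?_
          rw [← prod_filter_mul_prod_filter_not E (i ∈ S ·)]
          exact congrArg _ <| prod_congr rfl fun e he =>
            congrArg (· ^ θ e) (hg_const e (mem_filter.1 he).1 (mem_filter.1 he).2 a)
      _ = (∫⁻ a, ∏ e ∈ E with i ∈ S e, g e (Function.update z i a) ^ θ e ∂μ i)
            * ∏ e ∈ E with i ∉ S e, g e z ^ θ e :=
          lintegral_mul_const _ <| measurable_prod _ fun e he =>
            (hg_update e (mem_filter.1 he).1).pow_const _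
      _ ≤ (∏ e ∈ E with i ∈ S e, (∫⁻ a, g e (Function.update z i a) ∂μ i) ^ θ e)
            * ∏ e ∈ E with i ∉ S e, g e z ^ θ e := by
          gcongr
          exact ENNReal.lintegral_prod_norm_pow_le _
            (fun e he => (hg_update e (mem_filter.1 he).1).aemeasurable)
            (hA i (mem_insert_self i A)) (fun e he => hθ e (mem_filter.1 he).1)
      _ = _ := by
          rw [← prod_filter_mul_prod_filter_not E (i ∈ S ·)]
          congr 1 <;> refine prod_congr rfl fun e he => ?_
          · rw [hnew e (mem_filter.1 he).1, if_pos (mem_filter.1 he).2]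
          · rw [hnew e (mem_filter.1 he).1, if_neg (mem_filter.1 he).2]

end Marginal

theorem lintegral_lintegral_pi_eq_lintegral_pi_sum {ι κ α : Type*} [Fintype ι] [Fintype κ]
    [MeasurableSpace α] (μ : ι ⊕ κ → Measure α) [∀ i, SigmaFinite (μ i)]
    {F : (ι ⊕ κ → α) → ℝ≥0∞} (hF : Measurable F) :
    ∫⁻ s, ∫⁻ s', F (Sum.elim s s') ∂Measure.pi (fun j => μ (.inr j))
        ∂Measure.pi (fun i => μ (.inl i))
      = ∫⁻ z, F z ∂Measure.pi μ := by
  have he := measurePreserving_sumPiEquivProdPi_symm μ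
  rw [← he.lintegral_comp hF]
  exact (lintegral_prod _ (hF.comp he.measurable).aemeasurable).symm

section Graph

variable {D : Type*} [Fintype D]

theorem prod_mul_prod_prod_rpow_eq (a : D → ℝ≥0∞) (g : D → D → ℝ≥0∞) {θ : D → D → ℝ}
    (hθ : ∀ i j, 0 ≤ θ i j) (hdeg : ∀ i, ∑ j, (θ i j + θ j i) = 1) :
    (∏ i, a i) * ∏ i, ∏ j, g i j ^ θ i j = ∏ i, ∏ j, (a i * a j * g i j) ^ θ i j := by
  have hnode : ∏ i, a i = (∏ i, ∏ j, a i ^ θ i j) * ∏ i, ∏ j, a j ^ θ i j := by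
    rw [prod_comm (f := fun i j => a j ^ θ i j), ← prod_mul_distrib]
    refine prod_congr rfl fun i _ => ?_
    rw [← ENNReal.rpow_sum_of_nonneg fun j _ => hθ i j,
      ← ENNReal.rpow_sum_of_nonneg fun j _ => hθ j i,
      ← ENNReal.rpow_add_of_nonneg _ _ (sum_nonneg fun j _ => hθ i j)
        (sum_nonneg fun j _ => hθ j i), ← sum_add_distrib, hdeg i, ENNReal.rpow_one]
  simp only [hnode, ENNReal.mul_rpow_of_nonneg _ _ (hθ _ _), prod_mul_distrib]

variable {α : Type*} [MeasurableSpace α] [DecidableEq D]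

theorem lintegral_pi_prod_mul_prod_rpow_le (μ : D → Measure α) [∀ i, SigmaFinite (μ i)]
    {φ : D → α → ℝ≥0∞} (hφ : ∀ i, Measurable (φ i)) {G : α → α → ℝ≥0∞}
    (hG : Measurable (Function.uncurry G)) {θ : D → D → ℝ} (hθ : ∀ i j, 0 ≤ θ i j)
    (hdiag : ∀ i, θ i i = 0) (hdeg : ∀ i, ∑ j, (θ i j + θ j i) = 1) :
    ∫⁻ y, (∏ i, φ i (y i)) * ∏ i, ∏ j, G (y i) (y j) ^ θ i j ∂Measure.pi μ
      ≤ ∏ i, ∏ j, (∫⁻ a, ∫⁻ b, φ i a * φ j b * G a b ∂μ j ∂μ i) ^ θ i j := by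
  rcases isEmpty_or_nonempty (D → α) with _ | ⟨⟨z⟩⟩
  · simp
  let f : D × D → (D → α) → ℝ≥0∞ := fun e y => φ e.1 (y e.1) * φ e.2 (y e.2) * G (y e.1) (y e.2)
  have hf : ∀ e, Measurable (f e) := fun e => by fun_prop
  have hf_dep : ∀ e, DependsOn (f e) ({e.1, e.2} : Finset D) := fun e y y' h => by
    simp only [f, h e.1 (by simp), h e.2 (by simp)]
  have hdeg' : ∀ i, ∑ e : D × D with i ∈ ({e.1, e.2} : Finset D), θ e.1 e.2 = 1 := by
    intro i
    have hsplit : ∀ a b, (if i ∈ ({a, b} : Finset D) then θ a b else 0)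
        = (if a = i then θ a b else 0) + (if b = i then θ a b else 0) := by
      intro a b
      by_cases ha : a = i <;> by_cases hb : b = i <;> simp_all [eq_comm]
    rw [sum_filter, Fintype.sum_prod_type, ← hdeg i]
    simp only [hsplit, sum_add_distrib, sum_ite_irrel, sum_const_zero, sum_ite_eq', mem_univ,
      if_true]
  have hpair : ∀ i j, (∫⋯∫⁻_({i, j} ∩ univ), f (i, j) ∂μ) z ^ θ i j
      = (∫⁻ a, ∫⁻ b, φ i a * φ j b * G a b ∂μ j ∂μ i) ^ θ i j := by
    intro i j
    rcases eq_or_ne i j with rfl | hij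
    · simp [hdiag]
    · rw [inter_univ]
      exact congrArg (· ^ θ i j) <| lmarginal_pair hij
        (g := fun a b => φ i a * φ j b * G a b) (by fun_prop) z
  calc ∫⁻ y, (∏ i, φ i (y i)) * ∏ i, ∏ j, G (y i) (y j) ^ θ i j ∂Measure.pi μ
      = ∫⁻ y, ∏ e : D × D, f e y ^ θ e.1 e.2 ∂Measure.pi μ := lintegral_congr fun y => by
        rw [prod_mul_prod_prod_rpow_eq (fun i => φ i (y i)) (fun i j => G (y i) (y j)) hθ hdeg,
          Fintype.prod_prod_type]
    _ = (∫⋯∫⁻_univ, (fun y => ∏ e : D × D, f e y ^ θ e.1 e.2) ∂μ) z :=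
        lintegral_eq_lmarginal_univ z
    _ ≤ ∏ e : D × D, (∫⋯∫⁻_({e.1, e.2} ∩ univ), f e ∂μ) z ^ θ e.1 e.2 :=
        lmarginal_prod_rpow_le univ _ f (fun e _ => hf e) (fun e _ => hf_dep e) _
          (fun e _ => hθ e.1 e.2) univ (fun i _ => hdeg' i) z
    _ = _ := by
        rw [Fintype.prod_prod_type]
        exact prod_congr rfl fun i _ => prod_congr rfl fun j _ => hpair i j

end Graph

section TwoGraphs

variable {k k' : ℕ}

/-- The edge between `s j` and `s q` (`q < j`) sits at `(inl j, inl q)`, the one between `s j`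
and `s' j'` at `(inl j, inr j')`; all other entries vanish, so that every edge is counted once. -/
def twoGraphWeight (β : Fin k → Fin k → ℕ) (β' : Fin k' → Fin k' → ℕ) (γ : Fin k → Fin k' → ℕ) :
    Fin k ⊕ Fin k' → Fin k ⊕ Fin k' → ℕ
  | .inl j, .inl q => if q < j then β j q else 0
  | .inl j, .inr j' => γ j j'
  | .inr _, .inl _ => 0
  | .inr j', .inr q' => if q' < j' then β' j' q' else 0

theorem twoGraphWeight_self (β : Fin k → Fin k → ℕ) (β' : Fin k' → Fin k' → ℕ)
    (γ : Fin k → Fin k' → ℕ) (i : Fin k ⊕ Fin k') : twoGraphWeight β β' γ i i = 0 := by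
  rcases i with j | j <;> simp [twoGraphWeight]

theorem twoGraphWeight_degree (m : ℕ) (β : Fin k → Fin k → ℕ) (β' : Fin k' → Fin k' → ℕ)
    (γ : Fin k → Fin k' → ℕ)
    (hdeg : ∀ j : Fin k,
      (∑ q ∈ univ.filter (fun q => q < j), β j q)
        + (∑ p ∈ univ.filter (fun p => j < p), β p j)
        + (∑ j' : Fin k', γ j j') = m)
    (hdeg' : ∀ j' : Fin k',
      (∑ q' ∈ univ.filter (fun q' => q' < j'), β' j' q')
        + (∑ p' ∈ univ.filter (fun p' => j' < p'), β' p' j')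
        + (∑ j : Fin k, γ j j') = m) (i : Fin k ⊕ Fin k') :
    ∑ i', (twoGraphWeight β β' γ i i' + twoGraphWeight β β' γ i' i) = m := by
  rcases i with j | j'
  · rw [← hdeg j]
    simp only [twoGraphWeight, sum_add_distrib, Fintype.sum_sum_type, sum_const_zero, add_zero,
      sum_filter]
    ring
  · rw [← hdeg' j']
    simp only [twoGraphWeight, sum_add_distrib, Fintype.sum_sum_type, sum_const_zero, zero_add,
      sum_filter]
    ring

theorem prod_prod_abs_sub_rpow_twoGraphWeight (β : Fin k → Fin k → ℕ) (β' : Fin k' → Fin k' → ℕ)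
    (γ : Fin k → Fin k' → ℕ) (c : ℝ) (s : Fin k → ℝ) (s' : Fin k' → ℝ) :
    ∏ i, ∏ i', |Sum.elim s s' i - Sum.elim s s' i'| ^ ((twoGraphWeight β β' γ i i' : ℝ) * c)
      = (∏ j : Fin k, ∏ q ∈ univ.filter (fun q => q < j), |s j - s q| ^ ((β j q : ℝ) * c))
        * (∏ j' : Fin k', ∏ q' ∈ univ.filter (fun q' => q' < j'),
            |s' j' - s' q'| ^ ((β' j' q' : ℝ) * c))
        * (∏ j : Fin k, ∏ j' : Fin k', |s j - s' j'| ^ ((γ j j' : ℝ) * c)) := by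
  have hite : ∀ (p : Prop) [Decidable p] (r : ℝ) (n : ℕ),
      |r| ^ (((if p then n else 0 : ℕ) : ℝ) * c) = if p then |r| ^ ((n : ℝ) * c) else 1 := by
    intros; split_ifs <;> simp
  simp only [Fintype.prod_sum_type, Sum.elim_inl, Sum.elim_inr, twoGraphWeight, hite, prod_filter,
    Nat.cast_zero, zero_mul, Real.rpow_zero, prod_const_one, mul_one, prod_mul_distrib]
  ring

theorem two_graph_integrand_eq {m : ℕ} (hm : m ≠ 0) (c t t' : ℝ) (x : ℝ → ℝ≥0∞)
    (β : Fin k → Fin k → ℕ) (β' : Fin k' → Fin k' → ℕ) (γ : Fin k → Fin k' → ℕ)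
    (s : Fin k → ℝ) (s' : Fin k' → ℝ) :
    (∏ j, x (t - s j)) * (∏ j', x (t' - s' j')) *
      ENNReal.ofReal ((∏ j : Fin k, ∏ q ∈ univ.filter (fun q => q < j),
          |s j - s q| ^ ((β j q : ℝ) * c))
        * (∏ j' : Fin k', ∏ q' ∈ univ.filter (fun q' => q' < j'),
            |s' j' - s' q'| ^ ((β' j' q' : ℝ) * c))
        * (∏ j : Fin k, ∏ j' : Fin k', |s j - s' j'| ^ ((γ j j' : ℝ) * c)))
    = (∏ i, x (Sum.elim (fun _ => t) (fun _ => t') i - Sum.elim s s' i)) *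
      ∏ i, ∏ i', ENNReal.ofReal (|Sum.elim s s' i - Sum.elim s s' i'| ^ ((m : ℝ) * c))
        ^ ((twoGraphWeight β β' γ i i' : ℝ) / m) := by
  have hnn : ∀ i i' : Fin k ⊕ Fin k',
      0 ≤ |Sum.elim s s' i - Sum.elim s s' i'| ^ ((twoGraphWeight β β' γ i i' : ℝ) * c) :=
    fun _ _ => by positivity
  rw [← prod_prod_abs_sub_rpow_twoGraphWeight,
    ENNReal.ofReal_prod_of_nonneg fun i _ => prod_nonneg fun i' _ => hnn i i',
    Fintype.prod_sum_type fun i => x (Sum.elim (fun _ => t) (fun _ => t') i - Sum.elim s s' i)]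
  simp only [Sum.elim_inl, Sum.elim_inr, ENNReal.ofReal_abs_rpow_mul_rpow_div hm]
  exact congrArg _ <| prod_congr rfl fun i _ => ENNReal.ofReal_prod_of_nonneg fun i' _ => hnn i i'

theorem prod_prod_rpow_twoGraphWeight (P : ℝ → ℝ → ℝ≥0∞) (m : ℕ) (t t' : ℝ)
    (β : Fin k → Fin k → ℕ) (β' : Fin k' → Fin k' → ℕ) (γ : Fin k → Fin k' → ℕ) :
    ∏ i, ∏ i', P (Sum.elim (fun _ => t) (fun _ => t') i) (Sum.elim (fun _ => t) (fun _ => t') i')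
        ^ ((twoGraphWeight β β' γ i i' : ℝ) / m)
      = P t t ^ (((∑ j : Fin k, ∑ q ∈ univ.filter (fun q => q < j), β j q : ℕ) : ℝ) / m)
        * P t' t'
          ^ (((∑ j' : Fin k', ∑ q' ∈ univ.filter (fun q' => q' < j'), β' j' q' : ℕ) : ℝ) / m)
        * P t t' ^ (((∑ j : Fin k, ∑ j' : Fin k', γ j j' : ℕ) : ℝ) / m) := by
  simp only [Fintype.prod_sum_type, Sum.elim_inl, Sum.elim_inr, twoGraphWeight, prod_mul_distrib,
    ENNReal.prod_rpow_natCast_div, ← sum_filter, sum_const_zero, Nat.cast_zero, zero_div,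
    ENNReal.rpow_zero, prod_const_one, mul_one]
  ring

end TwoGraphs

theorem two_graph_hoelder_general (m k k' : ℕ) (hm : 1 ≤ m)
    (H0 : ℝ) (t t' : ℝ)
    (x : ℝ → ENNReal) (hx : Measurable x)
    (β : Fin k → Fin k → ℕ) (β' : Fin k' → Fin k' → ℕ) (γ : Fin k → Fin k' → ℕ)
    (hdeg : ∀ j : Fin k,
      (∑ q ∈ univ.filter (fun q => q < j), β j q)
        + (∑ p ∈ univ.filter (fun p => j < p), β p j)
        + (∑ j' : Fin k', γ j j') = m)
    (hdeg' : ∀ j' : Fin k',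
      (∑ q' ∈ univ.filter (fun q' => q' < j'), β' j' q')
        + (∑ p' ∈ univ.filter (fun p' => j' < p'), β' p' j')
        + (∑ j : Fin k, γ j j') = m) :
    (∫⁻ s in Set.univ.pi (fun _ : Fin k => Set.Iic t),
      ∫⁻ s' in Set.univ.pi (fun _ : Fin k' => Set.Iic t'),
        (∏ j, x (t - s j)) * (∏ j', x (t' - s' j')) *
        ENNReal.ofReal
          ((∏ j : Fin k, ∏ q ∈ univ.filter (fun q => q < j),
              |s j - s q| ^ ((β j q : ℝ) * (2*H0 - 2)))
            * (∏ j' : Fin k', ∏ q' ∈ univ.filter (fun q' => q' < j'),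
                |s' j' - s' q'| ^ ((β' j' q' : ℝ) * (2*H0 - 2)))
            * (∏ j : Fin k, ∏ j' : Fin k',
                |s j - s' j'| ^ ((γ j j' : ℝ) * (2*H0 - 2)))))
      ≤ pairIntegral m H0 x t t
          ^ (((∑ j : Fin k, ∑ q ∈ univ.filter (fun q => q < j), β j q : ℕ) : ℝ) / m)
        * pairIntegral m H0 x t' t'
          ^ (((∑ j' : Fin k', ∑ q' ∈ univ.filter (fun q' => q' < j'), β' j' q' : ℕ) : ℝ) / m)
        * pairIntegral m H0 x t t'
          ^ (((∑ j : Fin k, ∑ j' : Fin k', γ j j' : ℕ) : ℝ) / m) := by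
  have hm0 : m ≠ 0 := by omega
  let τ : Fin k ⊕ Fin k' → ℝ := Sum.elim (fun _ => t) (fun _ => t')
  let θ (i i' : Fin k ⊕ Fin k') : ℝ := (twoGraphWeight β β' γ i i' : ℝ) / m
  let G (a b : ℝ) : ℝ≥0∞ := ENNReal.ofReal (|a - b| ^ ((m : ℝ) * (2*H0 - 2)))
  let H (z : Fin k ⊕ Fin k' → ℝ) : ℝ≥0∞ :=
    (∏ i, x (τ i - z i)) * ∏ i, ∏ i', G (z i) (z i') ^ θ i i'
  have hG : Measurable (Function.uncurry G) := by fun_prop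
  have hH : Measurable H := by fun_prop
  have hθ : ∀ i, ∑ i', (θ i i' + θ i' i) = 1 := fun i => by
    simp_rw [θ, ← add_div, ← sum_div, ← Nat.cast_add, ← Nat.cast_sum,
      twoGraphWeight_degree m β β' γ hdeg hdeg' i]
    exact div_self (Nat.cast_ne_zero.2 hm0)
  calc _ = ∫⁻ s in Set.univ.pi fun _ => Set.Iic t, ∫⁻ s' in Set.univ.pi fun _ => Set.Iic t',
          H (Sum.elim s s') :=
        lintegral_congr fun s => lintegral_congr fun s' =>
          two_graph_integrand_eq hm0 _ t t' x β β' γ s s'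
    _ = ∫⁻ z, H z ∂Measure.pi fun i => volume.restrict (Set.Iic (τ i)) := by
        rw [volume_pi, Measure.restrict_pi_pi, volume_pi, Measure.restrict_pi_pi]
        exact lintegral_lintegral_pi_eq_lintegral_pi_sum
          (fun i => volume.restrict (Set.Iic (τ i))) hH
    _ ≤ ∏ i, ∏ i', pairIntegral m H0 x (τ i) (τ i') ^ θ i i' :=
        lintegral_pi_prod_mul_prod_rpow_le _ (fun i => by fun_prop) hG
          (fun _ _ => by positivity) (fun i => by simp [θ, twoGraphWeight_self]) hθ
    _ = _ := prod_prod_rpow_twoGraphWeight _ m t t' β β' γ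

/-- The two-graph generalized Hölder estimate: if every node of the two graphs (with
`β, β'` edge weights inside each graph and `γ` edge weights between the graphs)
has total degree `m`, then the entangled integral is bounded by
`A(t,t)^(b/m) · A(t',t')^(b'/m) · A(t,t')^(c/m)`, as an inequality in `[0,∞]`. -/
theorem two_graph_hoelder (m k k' : ℕ) (hm : 1 ≤ m) (hk : 1 ≤ k) (hk' : 1 ≤ k')
    (H0 : ℝ) (hH0 : 1/2 < H0) (hH0' : H0 < 1) (t t' : ℝ)
    (x : ℝ → ENNReal) (hx : Measurable x)
    (β : Fin k → Fin k → ℕ) (β' : Fin k' → Fin k' → ℕ) (γ : Fin k → Fin k' → ℕ)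
    (hdeg : ∀ j : Fin k,
      (∑ q ∈ univ.filter (fun q => q < j), β j q)
        + (∑ p ∈ univ.filter (fun p => j < p), β p j)
        + (∑ j' : Fin k', γ j j') = m)
    (hdeg' : ∀ j' : Fin k',
      (∑ q' ∈ univ.filter (fun q' => q' < j'), β' j' q')
        + (∑ p' ∈ univ.filter (fun p' => j' < p'), β' p' j')
        + (∑ j : Fin k, γ j j') = m) :
    (∫⁻ s in Set.univ.pi (fun _ : Fin k => Set.Iic t),
      ∫⁻ s' in Set.univ.pi (fun _ : Fin k' => Set.Iic t'),
        (∏ j, x (t - s j)) * (∏ j', x (t' - s' j')) *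
        ENNReal.ofReal
          ((∏ j : Fin k, ∏ q ∈ univ.filter (fun q => q < j),
              |s j - s q| ^ ((β j q : ℝ) * (2*H0 - 2)))
            * (∏ j' : Fin k', ∏ q' ∈ univ.filter (fun q' => q' < j'),
                |s' j' - s' q'| ^ ((β' j' q' : ℝ) * (2*H0 - 2)))
            * (∏ j : Fin k, ∏ j' : Fin k',
                |s j - s' j'| ^ ((γ j j' : ℝ) * (2*H0 - 2)))))
      ≤ pairIntegral m H0 x t t
          ^ (((∑ j : Fin k, ∑ q ∈ univ.filter (fun q => q < j), β j q : ℕ) : ℝ) / m)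
        * pairIntegral m H0 x t' t'
          ^ (((∑ j' : Fin k', ∑ q' ∈ univ.filter (fun q' => q' < j'), β' j' q' : ℕ) : ℝ) / m)
        * pairIntegral m H0 x t t'
          ^ (((∑ j : Fin k, ∑ j' : Fin k', γ j j' : ℕ) : ℝ) / m) :=
  two_graph_hoelder_general m k k' hm H0 t t' x hx β β' γ hdeg hdeg'
end

section
/- Let β > 1, C ≥ 0, and let R : ℝ → ℝ be measurable with |R(u)| ≤ C · min(1, |u|^{−β}) for all u ∈ ℝ. Then R ∈ L¹(ℝ), and for all T, T' ≥ 0: lim_{ε → 0+} ε ∫_0^{T/ε} ∫_0^{T'/ε} R(t−t') dt' dt = min(T, T') · ∫_ℝ R(u) du. -/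
/-!
After the substitution `u = t - t'` and Fubini, the double integral becomes `∫ L(u) R(u) du`,
where `L(u)` is the length of `[u, u + T'/ε] ∩ [0, T/ε]`. Rescaling, `ε L(u) = ℓ(εu)` with `ℓ`
the same overlap length for the intervals `[v, v + T']` and `[0, T]`: a continuous function bounded
by `min T T'` with `ℓ(0) = min T T'`. Dominated convergence against `|R| ∈ L¹` gives the limit;
integrability of `R` follows from `min(1, |u|^{-β}) ≤ ((1 + |u|)/2)^{-β}`.
-/

open MeasureTheory Real Filter Set Topology

lemma ite_min_one_abs_rpow_neg_le {β : ℝ} (hβ : 0 ≤ β) (u : ℝ) :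
    (if u = 0 then 1 else min 1 (|u| ^ (-β))) ≤ ((1 + |u|) / 2) ^ (-β) := by
  have hpos : 0 < (1 + |u|) / 2 := by positivity
  rcases le_or_gt |u| 1 with hu | hu
  · calc (if u = 0 then 1 else min 1 (|u| ^ (-β))) ≤ 1 := by split_ifs <;> simp
      _ ≤ ((1 + |u|) / 2) ^ (-β) :=
        one_le_rpow_of_pos_of_le_one_of_nonpos hpos (by linarith) (by linarith)
  · have hu0 : u ≠ 0 := by rintro rfl; simp at hu; linarith
    calc (if u = 0 then 1 else min 1 (|u| ^ (-β))) ≤ |u| ^ (-β) := by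
          rw [if_neg hu0]; exact min_le_right _ _
      _ ≤ ((1 + |u|) / 2) ^ (-β) := rpow_le_rpow_of_nonpos hpos (by linarith) (by linarith)

lemma integrable_one_add_abs_div_two_rpow_neg {β : ℝ} (hβ : 1 < β) :
    Integrable fun u : ℝ => ((1 + |u|) / 2) ^ (-β) := by
  have h := (integrable_one_add_norm (E := ℝ) (μ := volume) (r := β)
    (by simpa using hβ)).div_const ((2 : ℝ) ^ (-β))
  refine h.congr (ae_of_all _ fun u => ?_)
  simp only [Real.norm_eq_abs]
  rw [div_rpow (by positivity) zero_le_two]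

lemma integrable_of_abs_le_mul_min_one_abs_rpow_neg {β C : ℝ} (hβ : 1 < β) (hC : 0 ≤ C)
    {R : ℝ → ℝ} (hR : AEStronglyMeasurable R)
    (hbound : ∀ u : ℝ, |R u| ≤ C * (if u = 0 then 1 else min 1 (|u| ^ (-β)))) :
    Integrable R :=
  ((integrable_one_add_abs_div_two_rpow_neg hβ).const_mul C).mono' hR <| ae_of_all _ fun u =>
    (hbound u).trans (mul_le_mul_of_nonneg_left (ite_min_one_abs_rpow_neg_le (by linarith) u) hC)

/-- The length of `[u, u + S'] ∩ [0, S]`. -/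
def overlapLength (S S' u : ℝ) : ℝ :=
  max (min (u + S') S - max u 0) 0

section overlapLength

variable {S S' : ℝ}

lemma overlapLength_nonneg (u : ℝ) : 0 ≤ overlapLength S S' u :=
  le_max_right _ _

lemma overlapLength_le_min (hS : 0 ≤ S) (hS' : 0 ≤ S') (u : ℝ) :
    overlapLength S S' u ≤ min S S' := by
  refine max_le (le_min ?_ ?_) (le_min hS hS')
  · linarith [min_le_right (u + S') S, le_max_right u 0]
  · linarith [min_le_left (u + S') S, le_max_left u 0]

lemma overlapLength_zero (hS : 0 ≤ S) (hS' : 0 ≤ S') : overlapLength S S' 0 = min S S' := by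
  simp [overlapLength, min_comm, hS, hS']

lemma continuous_overlapLength : Continuous (overlapLength S S') := by
  unfold overlapLength; fun_prop

lemma mul_overlapLength {c : ℝ} (hc : 0 ≤ c) (u : ℝ) :
    c * overlapLength S S' u = overlapLength (c * S) (c * S') (c * u) := by
  simp only [overlapLength, mul_max_of_nonneg _ _ hc, mul_sub, mul_min_of_nonneg _ _ hc, mul_add,
    mul_zero]

lemma volume_real_Ico_inter_Ioc (u : ℝ) :
    volume.real (Ico u (u + S') ∩ Ioc 0 S) = overlapLength S S' u := by
  rw [measureReal_congr (Ico_ae_eq_Ioc.inter (EventuallyEq.rfl (f := Ioc 0 S))), Ioc_inter_Ioc,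
    volume_real_Ioc]
  rfl

end overlapLength

theorem integral_integral_sub_eq_integral_overlapLength {R : ℝ → ℝ} (hR : Integrable R)
    {S S' : ℝ} (hS : 0 ≤ S) (hS' : 0 ≤ S') :
    ∫ t in 0..S, ∫ t' in 0..S', R (t - t') = ∫ u, overlapLength S S' u * R u := by
  let A : Set (ℝ × ℝ) := {p | p.2 ∈ Ioc (p.1 - S') p.1}
  have hA : MeasurableSet A :=
    (measurableSet_lt (by fun_prop) measurable_snd).inter
      (measurableSet_le measurable_snd measurable_fst)
  let F : ℝ × ℝ → ℝ := A.indicator fun p => R p.2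
  have hF : Integrable F ((volume.restrict (Ioc 0 S)).prod volume) :=
    (hR.comp_snd _).indicator hA
  have hrow (t : ℝ) : ∫ t' in 0..S', R (t - t') = ∫ u, F (t, u) := by
    rw [intervalIntegral.integral_comp_sub_left (fun u => R u) t, sub_zero,
      intervalIntegral.integral_of_le (by linarith),
      ← integral_indicator measurableSet_Ioc]
    rfl
  have hcol (u : ℝ) : ∫ t in Ioc 0 S, F (t, u) = overlapLength S S' u * R u := by
    have hslice : (fun t => F (t, u)) = (Ico u (u + S')).indicator fun _ => R u := by
      ext t
      simp only [F, A, indicator_apply, mem_Ioc, mem_Ico]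
      congr 1
      exact propext ⟨fun h => ⟨h.2, by linarith [h.1]⟩, fun h => ⟨by linarith [h.2], h.1⟩⟩
    rw [hslice, integral_indicator measurableSet_Ico, setIntegral_const,
      measureReal_restrict_apply measurableSet_Ico, volume_real_Ico_inter_Ioc, smul_eq_mul]
  calc ∫ t in 0..S, ∫ t' in 0..S', R (t - t')
      = ∫ t in Ioc 0 S, ∫ u, F (t, u) := by simp only [intervalIntegral.integral_of_le hS, hrow]
    _ = ∫ u, ∫ t in Ioc 0 S, F (t, u) := integral_integral_swap (f := fun t u => F (t, u)) hF
    _ = ∫ u, overlapLength S S' u * R u := by simp only [hcol]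

theorem tendsto_integral_comp_mul_mul {g : ℝ → ℝ} (hg : Continuous g) {M : ℝ}
    (hgM : ∀ x, ‖g x‖ ≤ M) {R : ℝ → ℝ} (hR : Integrable R) :
    Tendsto (fun ε => ∫ u, g (ε * u) * R u) (𝓝 0) (𝓝 (g 0 * ∫ u, R u)) := by
  rw [← integral_const_mul]
  refine tendsto_integral_filter_of_dominated_convergence (fun u => M * ‖R u‖)
    (Eventually.of_forall fun ε => ?_) (Eventually.of_forall fun ε => ae_of_all _ fun u => ?_)
    (hR.norm.const_mul M) (ae_of_all _ fun u => ?_)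
  · exact ((hg.comp (continuous_const_mul ε)).aestronglyMeasurable).mul hR.aestronglyMeasurable
  · rw [norm_mul]
    exact mul_le_mul_of_nonneg_right (hgM _) (norm_nonneg _)
  · simpa using ((hg.comp (continuous_mul_const u)).tendsto 0).mul_const (R u)

/-- Convergence of covariances (Lemma 4.9 of the paper): if `R` is measurable with
`|R(u)| ≤ C·min(1,|u|^(−β))` (read as `C` at `u = 0`) for some `β > 1`, then `R ∈ L¹(ℝ)`
and for all `T, T' ≥ 0`,
`ε ∫_0^{T/ε} ∫_0^{T'/ε} R(t−t') dt' dt → min(T,T') ∫_ℝ R(u) du` as `ε → 0⁺`. -/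
theorem covariance_limit (β : ℝ) (hβ : 1 < β) (C : ℝ) (hC : 0 ≤ C)
    (R : ℝ → ℝ) (hR : Measurable R)
    (hbound : ∀ u : ℝ, |R u| ≤ C * (if u = 0 then 1 else min 1 (|u| ^ (-β)))) :
    Integrable R ∧
    ∀ T T' : ℝ, 0 ≤ T → 0 ≤ T' →
      Tendsto (fun ε : ℝ =>
          ε * ∫ t in (0:ℝ)..(T/ε), ∫ t' in (0:ℝ)..(T'/ε), R (t - t'))
        (nhdsWithin 0 (Set.Ioi 0))
        (nhds (min T T' * ∫ u : ℝ, R u)) := by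
  have hRint :=
    integrable_of_abs_le_mul_min_one_abs_rpow_neg hβ hC hR.aestronglyMeasurable hbound
  refine ⟨hRint, fun T T' hT hT' => ?_⟩
  have hlim := tendsto_integral_comp_mul_mul continuous_overlapLength
    (fun x => by rw [norm_of_nonneg (overlapLength_nonneg x)]; exact overlapLength_le_min hT hT' x)
    hRint
  rw [overlapLength_zero hT hT'] at hlim
  refine (hlim.mono_left nhdsWithin_le_nhds).congr' ?_
  filter_upwards [self_mem_nhdsWithin] with ε (hε : 0 < ε)
  rw [integral_integral_sub_eq_integral_overlapLength hRint (by positivity) (by positivity),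
    ← integral_const_mul]
  congr 1 with u
  rw [← mul_assoc, mul_overlapLength hε.le, mul_div_cancel₀ _ hε.ne', mul_div_cancel₀ _ hε.ne']
end

section
/- Let d ≥ 2 be an integer, p ∈ {1,…,d−1}, and β > 0 with βd > 1. Let B₁₃, B₁₄, B₂₃, B₂₄ be nonnegative integers with B₁₃ + B₁₄ = d−p and B₂₃ + B₂₄ = d−p. With ρ(s) = min(1, |s|^{−β}) (interpreted as 1 at s = 0), one has lim_{L → ∞} L^{−2} ∫_{[0,L]^4} ρ(t₁−t₂)^p · ρ(t₃−t₄)^p · ρ(t₁−t₃)^{B₁₃} · ρ(t₁−t₄)^{B₁₄} · ρ(t₂−t₃)^{B₂₃} · ρ(t₂−t₄)^{B₂₄} dt₁ dt₂ dt₃ dt₄ = 0. -/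
/-!
Write `ρᵢⱼ = ρ(tᵢ - tⱼ)` and `q = d - p`. Bounding `ρ₁₃^B₁₃ ρ₁₄^B₁₄ ≤ ρ₁₃^q + ρ₁₄^q` (and likewise
at `t₂`) and using the symmetry `t₃ ↔ t₄`, the integral is at most twice that of
`ρ₁₂^p ρ₃₄^p ρ₁₃^q (ρ₂₃^q + ρ₂₄^q)`. The quasi-triangle inequality
`min (ρ x) (ρ y) ≤ 2^β ρ (x + y)` gives `ρ₁₃^q ρ₂₃^q ≤ 2^(βq) ρ₁₂^q (ρ₁₃^q + ρ₂₃^q)`, and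
`ρ₃₄^p ρ₂₄^q ≤ ρ₃₄^d + ρ₂₄^d`, so every resulting term is a product along a path through the four
times whose edges carry the exponents `p`, `q` and `d`. Integrating out the leaves one by one, a
factor `ρ^k` contributes `∫₀ᴸ ρ(x - t)^k dt ≲ L^(1-c)` for any `c < 1` with `c ≤ βk`, and the last
time contributes `L`. Since `βp + βq = βd > 1`, the three exponents can be chosen with
`c_p + c_q + c_d > 2`, so the integral is `O(L^θ)` with `θ = 4 - (c_p + c_q + c_d) < 2`.
-/

open MeasureTheory Real Filter intervalIntegral

open Set ENNReal

section Algebra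

variable {R : Type*} [CommSemiring R] [LinearOrder R] [IsOrderedRing R] {a b c : R}

lemma pow_mul_pow_le_pow_add_pow (ha : 0 ≤ a) (hb : 0 ≤ b) (m n : ℕ) :
    a ^ m * b ^ n ≤ a ^ (m + n) + b ^ (m + n) := by
  rcases le_total a b with h | h
  · calc a ^ m * b ^ n ≤ b ^ m * b ^ n := by gcongr
      _ = b ^ (m + n) := (pow_add _ _ _).symm
      _ ≤ a ^ (m + n) + b ^ (m + n) := le_add_of_nonneg_left (by positivity)
  · calc a ^ m * b ^ n ≤ a ^ m * a ^ n := by gcongr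
      _ = a ^ (m + n) := (pow_add _ _ _).symm
      _ ≤ a ^ (m + n) + b ^ (m + n) := le_add_of_nonneg_right (by positivity)

lemma pow_mul_pow_le_of_min_le (ha : 0 ≤ a) (hb : 0 ≤ b) (h : min a b ≤ c) (q : ℕ) :
    a ^ q * b ^ q ≤ c ^ q * (a ^ q + b ^ q) := by
  have hmin : 0 ≤ min a b := le_min ha hb
  have hc : 0 ≤ c := hmin.trans h
  rw [← mul_pow, ← min_mul_max, mul_pow]
  gcongr
  · rcases max_cases a b with ⟨hm, -⟩ | ⟨hm, -⟩ <;> rw [hm]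
    exacts [le_add_of_nonneg_right (by positivity), le_add_of_nonneg_left (by positivity)]

end Algebra

section Lintegral4

variable {α : Type*} [MeasurableSpace α] (μ : Measure α)

noncomputable def lintegral4 (f : α → α → α → α → ℝ≥0∞) : ℝ≥0∞ :=
  ∫⁻ a, ∫⁻ b, ∫⁻ c, ∫⁻ d, f a b c d ∂μ ∂μ ∂μ ∂μ

variable {μ}

lemma lintegral4_mono {f g : α → α → α → α → ℝ≥0∞} (h : ∀ a b c d, f a b c d ≤ g a b c d) :
    lintegral4 μ f ≤ lintegral4 μ g :=
  lintegral_mono fun a => lintegral_mono fun b => lintegral_mono fun c => lintegral_mono (h a b c)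

lemma lintegral4_mul_le {F : α → α → ℝ≥0∞} {G : α → α → α → ℝ≥0∞}
    {H : α → α → α → α → ℝ≥0∞} {A B C : ℝ≥0∞}
    (hFm : ∀ a, Measurable (F a)) (hGm : ∀ a b, Measurable (G a b))
    (hHm : ∀ a b c, Measurable (H a b c))
    (hF : ∀ᵐ a ∂μ, ∫⁻ b, F a b ∂μ ≤ A)
    (hG : ∀ᵐ a ∂μ, ∀ᵐ b ∂μ, ∫⁻ c, G a b c ∂μ ≤ B)
    (hH : ∀ᵐ a ∂μ, ∀ᵐ b ∂μ, ∀ᵐ c ∂μ, ∫⁻ d, H a b c d ∂μ ≤ C) :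
    lintegral4 μ (fun a b c d => F a b * G a b c * H a b c d) ≤ μ univ * A * B * C := by
  unfold lintegral4
  calc ∫⁻ a, ∫⁻ b, ∫⁻ c, ∫⁻ d, F a b * G a b c * H a b c d ∂μ ∂μ ∂μ ∂μ
      ≤ ∫⁻ a, ∫⁻ b, ∫⁻ c, F a b * G a b c * C ∂μ ∂μ ∂μ := by
        refine lintegral_mono_ae (hH.mono fun a ha => lintegral_mono_ae (ha.mono fun b hb =>
          lintegral_mono_ae (hb.mono fun c hc => ?_)))
        rw [lintegral_const_mul _ (hHm a b c)]
        gcongr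
    _ ≤ ∫⁻ a, ∫⁻ b, F a b * B * C ∂μ ∂μ := by
        refine lintegral_mono_ae (hG.mono fun a ha => lintegral_mono_ae (ha.mono fun b hb => ?_))
        rw [lintegral_mul_const _ ((hGm a b).const_mul _), lintegral_const_mul _ (hGm a b)]
        gcongr
    _ ≤ ∫⁻ _, A * B * C ∂μ := by
        refine lintegral_mono_ae (hF.mono fun a ha => ?_)
        rw [lintegral_mul_const _ ((hFm a).mul_const _), lintegral_mul_const _ (hFm a)]
        gcongr
    _ = μ univ * A * B * C := by rw [lintegral_const]; ring

variable [SFinite μ]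

lemma lintegral4_eq_lintegral_prod {f : α → α → α → α → ℝ≥0∞}
    (hf : Measurable fun x : α × α × α × α => f x.1 x.2.1 x.2.2.1 x.2.2.2) :
    lintegral4 μ f = ∫⁻ x, f x.1 x.2.1 x.2.2.1 x.2.2.2 ∂μ.prod (μ.prod (μ.prod μ)) := by
  rw [lintegral_prod _ hf.aemeasurable]
  refine lintegral_congr fun a => ?_
  rw [lintegral_prod (fun y : α × α × α => f a y.1 y.2.1 y.2.2)
    (hf.comp measurable_prodMk_left).aemeasurable]
  refine lintegral_congr fun b => ?_
  rw [lintegral_prod (fun y : α × α => f a b y.1 y.2)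
    ((hf.comp measurable_prodMk_left).comp measurable_prodMk_left).aemeasurable]

lemma lintegral4_add {f g : α → α → α → α → ℝ≥0∞}
    (hf : Measurable fun x : α × α × α × α => f x.1 x.2.1 x.2.2.1 x.2.2.2)
    (hg : Measurable fun x : α × α × α × α => g x.1 x.2.1 x.2.2.1 x.2.2.2) :
    lintegral4 μ (f + g) = lintegral4 μ f + lintegral4 μ g := by
  rw [lintegral4_eq_lintegral_prod hf, lintegral4_eq_lintegral_prod hg,
    lintegral4_eq_lintegral_prod (hf.add hg), ← lintegral_add_left hf]
  rfl

lemma lintegral4_swap_last {f : α → α → α → α → ℝ≥0∞}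
    (hf : Measurable fun x : α × α × α × α => f x.1 x.2.1 x.2.2.1 x.2.2.2) :
    lintegral4 μ (fun a b c d => f a b d c) = lintegral4 μ f := by
  refine lintegral_congr fun a => lintegral_congr fun b => ?_
  exact lintegral_lintegral_swap
    (hf.comp (by fun_prop : Measurable fun y : α × α => (a, b, y.2, y.1))).aemeasurable

end Lintegral4

lemma Function.Even.apply_sub_comm {G β : Type*} [AddGroup G] {f : G → β}
    (hf : Function.Even f) (a b : G) : f (b - a) = f (a - b) := by
  rw [← neg_sub, hf]

lemma lintegral_Ioc_comp_sub_le {g : ℝ → ℝ≥0∞} (hg : Measurable g) (heven : Function.Even g)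
    {x L : ℝ} (hx : x ∈ Icc 0 L) :
    ∫⁻ t in Ioc 0 L, g (x - t) ≤ 2 * ∫⁻ u in Icc 0 L, g u := by
  have hsplit : ∀ t, (Ioc 0 L).indicator (fun t => g (x - t)) t ≤
      (Icc 0 L).indicator g (x - t) + (Icc 0 L).indicator g (t - x) := by
    intro t
    by_cases ht : t ∈ Ioc 0 L
    · rw [indicator_of_mem ht]
      rcases le_total t x with htx | hxt
      · rw [indicator_of_mem (by constructor <;> linarith [ht.1, hx.2])]
        exact le_self_add
      · rw [indicator_of_mem (s := Icc 0 L) (a := t - x) (by constructor <;> linarith [ht.2, hx.1]),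
          ← heven, neg_sub]
        exact le_add_self
    · simp [indicator_of_notMem ht]
  calc ∫⁻ t in Ioc 0 L, g (x - t)
      = ∫⁻ t, (Ioc 0 L).indicator (fun t => g (x - t)) t :=
        (lintegral_indicator measurableSet_Ioc _).symm
    _ ≤ ∫⁻ t, ((Icc 0 L).indicator g (x - t) + (Icc 0 L).indicator g (t - x)) :=
        lintegral_mono hsplit
    _ = 2 * ∫⁻ u in Icc 0 L, g u := by
        rw [lintegral_add_left (f := fun t => (Icc 0 L).indicator g (x - t))
            ((hg.indicator measurableSet_Icc).comp (measurable_const_sub x)),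
          lintegral_sub_left_eq_self ((Icc 0 L).indicator g),
          lintegral_sub_right_eq_self ((Icc 0 L).indicator g),
          lintegral_indicator measurableSet_Icc, two_mul]

lemma lintegral_Ioc_rpow {r L : ℝ} (hr : -1 < r) (hL : 0 ≤ L) :
    ∫⁻ u in Ioc 0 L, ENNReal.ofReal (u ^ r) = ENNReal.ofReal (L ^ (r + 1) / (r + 1)) := by
  have hint : IntegrableOn (fun u : ℝ => u ^ r) (Ioc 0 L) := by
    simpa [intervalIntegrable_iff_integrableOn_Ioc_of_le hL] using
      (intervalIntegrable_rpow' (a := 0) (b := L) hr)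
  rw [← ofReal_integral_eq_lintegral_ofReal hint
    ((ae_restrict_mem measurableSet_Ioc).mono fun u hu => Real.rpow_nonneg hu.1.le r),
    ← intervalIntegral.integral_of_le hL, integral_rpow (Or.inl hr),
    Real.zero_rpow (by linarith), sub_zero]

section Kernel

variable {μ : Measure ℝ} {κ : ℝ → ℝ≥0∞}

lemma ae_ae_lintegral_add_le (hκ : Measurable κ) {k : ℕ} {A : ℝ≥0∞}
    (hA : ∀ᵐ x ∂μ, ∫⁻ t, κ (x - t) ^ k ∂μ ≤ A) :
    ∀ᵐ a ∂μ, ∀ᵐ b ∂μ, ∫⁻ t, (κ (a - t) ^ k + κ (b - t) ^ k) ∂μ ≤ 2 * A := by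
  filter_upwards [hA] with a ha
  filter_upwards [hA] with b hb
  rw [lintegral_add_left (by fun_prop), two_mul]
  exact add_le_add ha hb

variable [SFinite μ]

lemma lintegral4_contraction_le_two_mul (hκ : Measurable κ) (heven : Function.Even κ)
    {p q B13 B14 B23 B24 : ℕ} (h1 : B13 + B14 = q) (h2 : B23 + B24 = q) :
    lintegral4 μ (fun a b c d => κ (a - b) ^ p * κ (c - d) ^ p * κ (a - c) ^ B13
        * κ (a - d) ^ B14 * κ (b - c) ^ B23 * κ (b - d) ^ B24)
      ≤ 2 * lintegral4 μ (fun a b c d =>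
        κ (a - b) ^ p * κ (c - d) ^ p * κ (a - c) ^ q * (κ (b - c) ^ q + κ (b - d) ^ q)) := by
  set H : ℝ → ℝ → ℝ → ℝ → ℝ≥0∞ := fun a b c d =>
    κ (a - b) ^ p * κ (c - d) ^ p * κ (a - c) ^ q * (κ (b - c) ^ q + κ (b - d) ^ q) with hH
  have hHm : Measurable fun x : ℝ × ℝ × ℝ × ℝ => H x.1 x.2.1 x.2.2.1 x.2.2.2 := by fun_prop
  have hsplit : ∀ a b c d, κ (a - b) ^ p * κ (c - d) ^ p * κ (a - c) ^ B13
      * κ (a - d) ^ B14 * κ (b - c) ^ B23 * κ (b - d) ^ B24 ≤ H a b c d + H a b d c := by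
    intro a b c d
    calc κ (a - b) ^ p * κ (c - d) ^ p * κ (a - c) ^ B13
          * κ (a - d) ^ B14 * κ (b - c) ^ B23 * κ (b - d) ^ B24
        = κ (a - b) ^ p * κ (c - d) ^ p * (κ (a - c) ^ B13 * κ (a - d) ^ B14)
          * (κ (b - c) ^ B23 * κ (b - d) ^ B24) := by ring
      _ ≤ κ (a - b) ^ p * κ (c - d) ^ p * (κ (a - c) ^ q + κ (a - d) ^ q)
          * (κ (b - c) ^ q + κ (b - d) ^ q) := by
        gcongr
        · exact h1 ▸ pow_mul_pow_le_pow_add_pow zero_le zero_le _ _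
        · exact h2 ▸ pow_mul_pow_le_pow_add_pow zero_le zero_le _ _
      _ = H a b c d + H a b d c := by rw [hH]; simp only [heven.apply_sub_comm c d]; ring
  calc lintegral4 μ _ ≤ lintegral4 μ (H + fun a b c d => H a b d c) := lintegral4_mono hsplit
    _ = 2 * lintegral4 μ H := by
        rw [lintegral4_add hHm (by fun_prop), lintegral4_swap_last hHm, two_mul]

lemma lintegral4_reduced_le (hκ : Measurable κ) (heven : Function.Even κ) {w : ℝ≥0∞}
    (htri : ∀ x y, min (κ x) (κ y) ≤ w * κ (x + y)) {p q : ℕ} {Ap Aq Ad : ℝ≥0∞}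
    (hAp : ∀ᵐ x ∂μ, ∫⁻ t, κ (x - t) ^ p ∂μ ≤ Ap)
    (hAq : ∀ᵐ x ∂μ, ∫⁻ t, κ (x - t) ^ q ∂μ ≤ Aq)
    (hAd : ∀ᵐ x ∂μ, ∫⁻ t, κ (x - t) ^ (p + q) ∂μ ≤ Ad) :
    lintegral4 μ (fun a b c d =>
        κ (a - b) ^ p * κ (c - d) ^ p * κ (a - c) ^ q * (κ (b - c) ^ q + κ (b - d) ^ q))
      ≤ 2 * (w ^ q + 1) * μ univ * Ap * Aq * Ad := by
  set P₁ : ℝ → ℝ → ℝ → ℝ → ℝ≥0∞ := fun a b c d =>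
    w ^ q * κ (a - b) ^ (p + q) * (κ (a - c) ^ q + κ (b - c) ^ q) * κ (c - d) ^ p
  set P₂ : ℝ → ℝ → ℝ → ℝ → ℝ≥0∞ := fun a b c d =>
    κ (a - b) ^ p * κ (a - c) ^ q * (κ (b - d) ^ (p + q) + κ (c - d) ^ (p + q))
  have hle : ∀ a b c d, κ (a - b) ^ p * κ (c - d) ^ p * κ (a - c) ^ q
      * (κ (b - c) ^ q + κ (b - d) ^ q) ≤ P₁ a b c d + P₂ a b c d := by
    intro a b c d
    have hmin : min (κ (a - c)) (κ (b - c)) ≤ w * κ (a - b) := by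
      simpa [heven.apply_sub_comm b c] using htri (a - c) (c - b)
    calc κ (a - b) ^ p * κ (c - d) ^ p * κ (a - c) ^ q * (κ (b - c) ^ q + κ (b - d) ^ q)
        = κ (a - b) ^ p * κ (c - d) ^ p * (κ (a - c) ^ q * κ (b - c) ^ q)
          + κ (a - b) ^ p * κ (a - c) ^ q * (κ (c - d) ^ p * κ (b - d) ^ q) := by ring
      _ ≤ κ (a - b) ^ p * κ (c - d) ^ p
            * ((w * κ (a - b)) ^ q * (κ (a - c) ^ q + κ (b - c) ^ q))
          + κ (a - b) ^ p * κ (a - c) ^ q * (κ (b - d) ^ (p + q) + κ (c - d) ^ (p + q)) := by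
        gcongr _ * ?_ + _ * ?_
        · exact pow_mul_pow_le_of_min_le zero_le zero_le hmin q
        · rw [add_comm (κ (b - d) ^ (p + q))]
          exact pow_mul_pow_le_pow_add_pow zero_le zero_le _ _
      _ = P₁ a b c d + P₂ a b c d := by ring
  have hP₁ : lintegral4 μ P₁ ≤ μ univ * (w ^ q * Ad) * (2 * Aq) * Ap :=
    lintegral4_mul_le (by fun_prop) (by fun_prop) (by fun_prop)
      (hAd.mono fun a ha => by rw [lintegral_const_mul _ (by fun_prop)]; gcongr)
      (ae_ae_lintegral_add_le hκ hAq) (ae_of_all _ fun _ => ae_of_all _ fun _ => hAp)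
  have hP₂ : lintegral4 μ P₂ ≤ μ univ * Ap * Aq * (2 * Ad) :=
    lintegral4_mul_le (by fun_prop) (by fun_prop) (by fun_prop) hAp
      (hAq.mono fun _ ha => ae_of_all _ fun _ => ha)
      (ae_of_all _ fun _ => ae_ae_lintegral_add_le hκ hAd)
  calc lintegral4 μ _ ≤ lintegral4 μ (P₁ + P₂) := lintegral4_mono hle
    _ = lintegral4 μ P₁ + lintegral4 μ P₂ := lintegral4_add (by fun_prop) (by fun_prop)
    _ ≤ μ univ * (w ^ q * Ad) * (2 * Aq) * Ap + μ univ * Ap * Aq * (2 * Ad) := add_le_add hP₁ hP₂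
    _ = 2 * (w ^ q + 1) * μ univ * Ap * Aq * Ad := by ring

theorem lintegral4_contraction_le (hκ : Measurable κ) (heven : Function.Even κ) {w : ℝ≥0∞}
    (htri : ∀ x y, min (κ x) (κ y) ≤ w * κ (x + y)) {p q B13 B14 B23 B24 : ℕ}
    (h1 : B13 + B14 = q) (h2 : B23 + B24 = q) {Ap Aq Ad : ℝ≥0∞}
    (hAp : ∀ᵐ x ∂μ, ∫⁻ t, κ (x - t) ^ p ∂μ ≤ Ap)
    (hAq : ∀ᵐ x ∂μ, ∫⁻ t, κ (x - t) ^ q ∂μ ≤ Aq)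
    (hAd : ∀ᵐ x ∂μ, ∫⁻ t, κ (x - t) ^ (p + q) ∂μ ≤ Ad) :
    lintegral4 μ (fun a b c d => κ (a - b) ^ p * κ (c - d) ^ p * κ (a - c) ^ B13
        * κ (a - d) ^ B14 * κ (b - c) ^ B23 * κ (b - d) ^ B24)
      ≤ 4 * (w ^ q + 1) * μ univ * Ap * Aq * Ad :=
  calc _ ≤ 2 * (2 * (w ^ q + 1) * μ univ * Ap * Aq * Ad) :=
        (lintegral4_contraction_le_two_mul hκ heven h1 h2).trans
          (by gcongr; exact lintegral4_reduced_le hκ heven htri hAp hAq hAd)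
    _ = 4 * (w ^ q + 1) * μ univ * Ap * Aq * Ad := by ring

end Kernel

-- `|0| ^ (-β)` is `0` in Mathlib, so `ρ(0) = 1` needs its own case.
noncomputable def rho (β s : ℝ) : ℝ := if s = 0 then 1 else min 1 (|s| ^ (-β))

lemma rho_nonneg (β s : ℝ) : 0 ≤ rho β s := by
  unfold rho; split_ifs <;> positivity

lemma rho_le_one (β s : ℝ) : rho β s ≤ 1 := by
  unfold rho; split_ifs
  exacts [le_rfl, min_le_left _ _]

lemma rho_neg (β s : ℝ) : rho β (-s) = rho β s := by
  simp [rho]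

@[fun_prop]
lemma measurable_rho (β : ℝ) : Measurable (rho β) := by
  unfold rho
  exact Measurable.ite (measurableSet_singleton 0) measurable_const (by fun_prop)

lemma rho_sub (β x y : ℝ) :
    rho β (x - y) = if x = y then 1 else min 1 (|x - y| ^ (-β)) := by
  simp only [rho, sub_eq_zero]

lemma rho_of_ne_zero {β s : ℝ} (hs : s ≠ 0) : rho β s = min 1 (|s| ^ (-β)) := if_neg hs

lemma rho_le_rpow_neg {c s : ℝ} (hs : 0 < s) : rho c s ≤ s ^ (-c) := by
  rw [rho_of_ne_zero hs.ne', abs_of_pos hs]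
  exact min_le_right _ _

lemma rho_pow_le {β c : ℝ} {k : ℕ} (hc : 0 ≤ c) (hck : c ≤ β * k) (s : ℝ) :
    rho β s ^ k ≤ rho c s := by
  rcases eq_or_ne s 0 with rfl | hs
  · simp [rho]
  have hs' : 0 < |s| := abs_pos.2 hs
  rw [rho_of_ne_zero (β := c) hs]
  refine le_min (pow_le_one₀ (rho_nonneg β s) (rho_le_one β s)) ?_
  rcases le_or_gt 1 |s| with h1 | h1
  · calc rho β s ^ k ≤ (|s| ^ (-β)) ^ k := by
          rw [rho_of_ne_zero hs]
          exact pow_le_pow_left₀ (le_min zero_le_one (by positivity)) (min_le_right _ _) k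
      _ = |s| ^ (-(β * k)) := by
          rw [← Real.rpow_natCast, ← Real.rpow_mul hs'.le, neg_mul]
      _ ≤ |s| ^ (-c) := Real.rpow_le_rpow_of_exponent_le h1 (by linarith)
  · calc rho β s ^ k ≤ 1 := pow_le_one₀ (rho_nonneg β s) (rho_le_one β s)
      _ ≤ |s| ^ (-c) := Real.one_le_rpow_of_pos_of_le_one_of_nonpos hs' h1.le (by linarith)

lemma rho_le_two_rpow_mul {β x z : ℝ} (hβ : 0 ≤ β) (h : |z| ≤ 2 * |x|) :
    rho β x ≤ 2 ^ β * rho β z := by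
  have h2 : (1 : ℝ) ≤ 2 ^ β := Real.one_le_rpow one_le_two hβ
  rcases eq_or_ne z 0 with rfl | hz
  · simpa [rho] using (rho_le_one β x).trans h2
  have hz' : 0 < |z| := abs_pos.2 hz
  have hx : x ≠ 0 := fun hx0 => hz <| abs_eq_zero.1 <|
    le_antisymm (by simpa [hx0] using h) (abs_nonneg z)
  rw [rho_of_ne_zero hx, rho_of_ne_zero hz, mul_min_of_nonneg _ _ (by positivity), mul_one]
  refine min_le_min h2 ?_
  calc |x| ^ (-β) ≤ (|z| / 2) ^ (-β) :=
        Real.rpow_le_rpow_of_nonpos (by positivity) (by linarith) (by linarith)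
    _ = 2 ^ β * |z| ^ (-β) := by
        rw [Real.div_rpow hz'.le zero_le_two, Real.rpow_neg zero_le_two]
        field_simp

lemma min_rho_le (β : ℝ) (hβ : 0 ≤ β) (x y : ℝ) :
    min (rho β x) (rho β y) ≤ 2 ^ β * rho β (x + y) := by
  rcases le_total |x| |y| with h | h
  · exact (min_le_right _ _).trans
      (rho_le_two_rpow_mul hβ (by linarith [abs_add_le x y]))
  · exact (min_le_left _ _).trans
      (rho_le_two_rpow_mul hβ (by linarith [abs_add_le x y]))

lemma lintegral_rho_pow_le {β c : ℝ} {k : ℕ} (hc0 : 0 ≤ c) (hc1 : c < 1) (hck : c ≤ β * k)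
    {x L : ℝ} (hx : x ∈ Icc 0 L) :
    ∫⁻ t in Ioc 0 L, ENNReal.ofReal (rho β (x - t)) ^ k
      ≤ ENNReal.ofReal (2 / (1 - c) * L ^ (1 - c)) := by
  have hL : 0 ≤ L := hx.1.trans hx.2
  calc ∫⁻ t in Ioc 0 L, ENNReal.ofReal (rho β (x - t)) ^ k
      ≤ ∫⁻ t in Ioc 0 L, ENNReal.ofReal (rho c (x - t)) :=
        lintegral_mono fun t => by
          rw [← ENNReal.ofReal_pow (rho_nonneg _ _)]
          exact ENNReal.ofReal_le_ofReal (rho_pow_le hc0 hck _)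
    _ ≤ 2 * ∫⁻ u in Icc 0 L, ENNReal.ofReal (rho c u) :=
        lintegral_Ioc_comp_sub_le (by fun_prop) (fun s => by rw [rho_neg]) hx
    _ = 2 * ∫⁻ u in Ioc 0 L, ENNReal.ofReal (rho c u) := by
        rw [setLIntegral_congr Ioc_ae_eq_Icc]
    _ ≤ 2 * ∫⁻ u in Ioc 0 L, ENNReal.ofReal (u ^ (-c)) := by
        gcongr 2 * ?_
        exact setLIntegral_mono' measurableSet_Ioc fun u hu =>
          ENNReal.ofReal_le_ofReal (rho_le_rpow_neg hu.1)
    _ = ENNReal.ofReal (2 / (1 - c) * L ^ (1 - c)) := by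
        rw [lintegral_Ioc_rpow (by linarith) hL, ← ENNReal.ofReal_ofNat 2,
          ← ENNReal.ofReal_mul zero_le_two, neg_add_eq_sub]
        ring_nf

lemma enorm_intervalIntegral4_le (f : ℝ → ℝ → ℝ → ℝ → ℝ) {a b : ℝ} (hab : a ≤ b) :
    ‖∫ t₁ in a..b, ∫ t₂ in a..b, ∫ t₃ in a..b, ∫ t₄ in a..b, f t₁ t₂ t₃ t₄‖ₑ
      ≤ lintegral4 (volume.restrict (Ioc a b)) fun t₁ t₂ t₃ t₄ => ‖f t₁ t₂ t₃ t₄‖ₑ := by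
  simp only [intervalIntegral.integral_of_le hab]
  refine (enorm_integral_le_lintegral_enorm _).trans <| lintegral_mono fun t₁ =>
    (enorm_integral_le_lintegral_enorm _).trans <| lintegral_mono fun t₂ =>
    (enorm_integral_le_lintegral_enorm _).trans <| lintegral_mono fun t₃ =>
    enorm_integral_le_lintegral_enorm _

lemma enorm_integral_contraction_le {β : ℝ} (hβ : 0 ≤ β) {p q B13 B14 B23 B24 : ℕ}
    (h1 : B13 + B14 = q) (h2 : B23 + B24 = q) {cp cq cd : ℝ}
    (hcp : 0 ≤ cp ∧ cp < 1 ∧ cp ≤ β * p) (hcq : 0 ≤ cq ∧ cq < 1 ∧ cq ≤ β * q)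
    (hcd : 0 ≤ cd ∧ cd < 1 ∧ cd ≤ β * (p + q)) {L : ℝ} (hL : 0 ≤ L) :
    ‖∫ t₁ in (0 : ℝ)..L, ∫ t₂ in (0 : ℝ)..L, ∫ t₃ in (0 : ℝ)..L, ∫ t₄ in (0 : ℝ)..L,
        rho β (t₁ - t₂) ^ p * rho β (t₃ - t₄) ^ p * rho β (t₁ - t₃) ^ B13
          * rho β (t₁ - t₄) ^ B14 * rho β (t₂ - t₃) ^ B23 * rho β (t₂ - t₄) ^ B24‖ₑ
      ≤ 4 * ENNReal.ofReal ((2 ^ β) ^ q + 1) * ENNReal.ofReal L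
        * ENNReal.ofReal (2 / (1 - cp) * L ^ (1 - cp))
        * ENNReal.ofReal (2 / (1 - cq) * L ^ (1 - cq))
        * ENNReal.ofReal (2 / (1 - cd) * L ^ (1 - cd)) := by
  have hbound : ∀ {c : ℝ} {k : ℕ}, 0 ≤ c ∧ c < 1 ∧ c ≤ β * k →
      ∀ᵐ x ∂volume.restrict (Ioc 0 L), ∫⁻ t in Ioc 0 L, ENNReal.ofReal (rho β (x - t)) ^ k
        ≤ ENNReal.ofReal (2 / (1 - c) * L ^ (1 - c)) := fun ⟨h0, h1, hk⟩ =>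
    (ae_restrict_mem measurableSet_Ioc).mono fun x hx =>
      lintegral_rho_pow_le h0 h1 hk (Ioc_subset_Icc_self hx)
  refine ((enorm_intervalIntegral4_le _ hL).trans_eq ?_).trans <|
    (lintegral4_contraction_le (κ := fun s => ENNReal.ofReal (rho β s))
      (w := ENNReal.ofReal (2 ^ β)) (by fun_prop) (fun s => by simp only [rho_neg])
      (fun x y => by
        rw [← ENNReal.ofReal_min, ← ENNReal.ofReal_mul (by positivity)]
        exact ENNReal.ofReal_le_ofReal (min_rho_le β hβ x y))
      h1 h2 (hbound hcp) (hbound hcq) (hbound (k := p + q) (by push_cast; exact hcd))).trans_eq ?_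
  · simp only [enorm_mul, enorm_pow, Real.enorm_of_nonneg (rho_nonneg _ _)]
  · rw [Measure.restrict_apply_univ, Real.volume_Ioc, sub_zero, ENNReal.ofReal_add
      (by positivity) zero_le_one, ENNReal.ofReal_pow (by positivity), ENNReal.ofReal_one]

theorem norm_integral_contraction_le {β : ℝ} (hβ : 0 ≤ β) {p q B13 B14 B23 B24 : ℕ}
    (h1 : B13 + B14 = q) (h2 : B23 + B24 = q) {cp cq cd : ℝ}
    (hcp : 0 ≤ cp ∧ cp < 1 ∧ cp ≤ β * p) (hcq : 0 ≤ cq ∧ cq < 1 ∧ cq ≤ β * q)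
    (hcd : 0 ≤ cd ∧ cd < 1 ∧ cd ≤ β * (p + q)) {L : ℝ} (hL : 0 < L) :
    ‖∫ t₁ in (0 : ℝ)..L, ∫ t₂ in (0 : ℝ)..L, ∫ t₃ in (0 : ℝ)..L, ∫ t₄ in (0 : ℝ)..L,
        rho β (t₁ - t₂) ^ p * rho β (t₃ - t₄) ^ p * rho β (t₁ - t₃) ^ B13
          * rho β (t₁ - t₄) ^ B14 * rho β (t₂ - t₃) ^ B23 * rho β (t₂ - t₄) ^ B24‖
      ≤ 4 * ((2 ^ β) ^ q + 1) * (2 / (1 - cp) * (2 / (1 - cq) * (2 / (1 - cd))))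
          * L ^ (4 - (cp + cq + cd)) := by
  have hnonneg : ∀ {c : ℝ}, c < 1 → 0 ≤ 2 / (1 - c) * L ^ (1 - c) := fun hc =>
    mul_nonneg (div_nonneg zero_le_two (sub_pos.2 hc).le) (Real.rpow_nonneg hL.le _)
  rw [← toReal_enorm]
  refine (ENNReal.toReal_mono (by finiteness)
    (enorm_integral_contraction_le hβ h1 h2 hcp hcq hcd hL.le)).trans_eq ?_
  simp only [ENNReal.toReal_mul, ENNReal.toReal_ofReal (by positivity : (0 : ℝ) ≤ (2 ^ β) ^ q + 1),
    ENNReal.toReal_ofReal hL.le, ENNReal.toReal_ofReal (hnonneg hcp.2.1),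
    ENNReal.toReal_ofReal (hnonneg hcq.2.1), ENNReal.toReal_ofReal (hnonneg hcd.2.1)]
  rw [show 4 - (cp + cq + cd) = 1 + (1 - cp) + (1 - cq) + (1 - cd) by ring,
    Real.rpow_add hL, Real.rpow_add hL, Real.rpow_add hL, Real.rpow_one]
  norm_num
  ring

lemma exists_exponents_sum_gt_two {a b : ℝ} (ha : 0 < a) (hb : 0 < b) (hab : 1 < a + b) :
    ∃ x y z : ℝ, (0 ≤ x ∧ x < 1 ∧ x ≤ a) ∧ (0 ≤ y ∧ y < 1 ∧ y ≤ b)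
      ∧ (0 ≤ z ∧ z < 1 ∧ z ≤ a + b) ∧ 2 < x + y + z := by
  obtain ⟨m, hm, hma, hmb, hmab, hm1⟩ : ∃ m : ℝ, 0 < m ∧ m ≤ a ∧ m ≤ b ∧ m ≤ a + b - 1 ∧ m ≤ 1 :=
    ⟨min (min a b) (min (a + b - 1) 1), by positivity, (min_le_left _ _).trans (min_le_left _ _),
      (min_le_left _ _).trans (min_le_right _ _), (min_le_right _ _).trans (min_le_left _ _),
      (min_le_right _ _).trans (min_le_right _ _)⟩
  refine ⟨min a (1 - m / 4), min b (1 - m / 4), 1 - m / 4,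
    ⟨le_min ha.le (by linarith), (min_le_right _ _).trans_lt (by linarith), min_le_left _ _⟩,
    ⟨le_min hb.le (by linarith), (min_le_right _ _).trans_lt (by linarith), min_le_left _ _⟩,
    ⟨by linarith, by linarith, by linarith⟩, ?_⟩
  rcases min_cases a (1 - m / 4) with ⟨hx, -⟩ | ⟨hx, -⟩ <;>
    rcases min_cases b (1 - m / 4) with ⟨hy, -⟩ | ⟨hy, -⟩ <;> rw [hx, hy] <;> linarith

theorem contractions_vanish_general (d p : ℕ) (hp : 1 ≤ p) (hpd : p ≤ d - 1)
    (β : ℝ) (hβ : 0 < β) (hβd : 1 < β * d)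
    (B13 B14 B23 B24 : ℕ) (h1 : B13 + B14 = d - p) (h2 : B23 + B24 = d - p) :
    Tendsto (fun L : ℝ =>
        (∫ t₁ in (0:ℝ)..L, ∫ t₂ in (0:ℝ)..L, ∫ t₃ in (0:ℝ)..L, ∫ t₄ in (0:ℝ)..L,
            (if t₁ = t₂ then 1 else min 1 (|t₁ - t₂| ^ (-β))) ^ p
          * (if t₃ = t₄ then 1 else min 1 (|t₃ - t₄| ^ (-β))) ^ p
          * (if t₁ = t₃ then 1 else min 1 (|t₁ - t₃| ^ (-β))) ^ B13
          * (if t₁ = t₄ then 1 else min 1 (|t₁ - t₄| ^ (-β))) ^ B14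
          * (if t₂ = t₃ then 1 else min 1 (|t₂ - t₃| ^ (-β))) ^ B23
          * (if t₂ = t₄ then 1 else min 1 (|t₂ - t₄| ^ (-β))) ^ B24) / L ^ 2)
      atTop (nhds 0) := by
  simp only [← rho_sub]
  have hq : 1 ≤ d - p := by omega
  have hsum : β * p + β * (d - p : ℕ) = β * d := by
    rw [← mul_add, ← Nat.cast_add, Nat.add_sub_cancel' (by omega)]
  obtain ⟨cp, cq, cd, hcp, hcq, hcd, hgt⟩ :=
    exists_exponents_sum_gt_two (a := β * p) (b := β * (d - p : ℕ)) (by positivity) (by positivity)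
      (by linarith)
  set C := 4 * ((2 ^ β) ^ (d - p : ℕ) + 1) * (2 / (1 - cp) * (2 / (1 - cq) * (2 / (1 - cd))))
  refine squeeze_zero_norm' (a := fun L => C * L ^ (2 - (cp + cq + cd))) ?_ ?_
  · filter_upwards [eventually_gt_atTop 0] with L hL
    rw [norm_div, norm_pow, Real.norm_of_nonneg hL.le, div_le_iff₀ (by positivity)]
    calc _ ≤ C * L ^ (4 - (cp + cq + cd)) := norm_integral_contraction_le hβ.le h1 h2 hcp hcq
          ⟨hcd.1, hcd.2.1, by rw [mul_add]; exact hcd.2.2⟩ hL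
      _ = C * (L ^ (2 - (cp + cq + cd)) * L ^ 2) := by
        rw [← Real.rpow_natCast L 2, ← Real.rpow_add hL]
        congr 2
        push_cast
        ring
      _ = C * L ^ (2 - (cp + cq + cd)) * L ^ 2 := (mul_assoc _ _ _).symm
  · simpa [neg_sub] using
      (tendsto_rpow_neg_atTop (by linarith : 0 < cp + cq + cd - 2)).const_mul C

/-- Vanishing of contractions in the short-range dependent case (Lemma 4.11 of the
paper): with `ρ(s) = min(1,|s|^(−β))` (read as `1` at `s = 0`), `βd > 1`,
`1 ≤ p ≤ d−1`, and nonnegative integers `B₁₃ + B₁₄ = B₂₃ + B₂₄ = d − p`, the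
normalized four-fold integral `L^(−2) ∫_{[0,L]^4} ρ^p ρ^p ρ^{B₁₃} ρ^{B₁₄} ρ^{B₂₃} ρ^{B₂₄}`
tends to `0` as `L → ∞`. -/
theorem contractions_vanish (d p : ℕ) (hd : 2 ≤ d) (hp : 1 ≤ p) (hpd : p ≤ d - 1)
    (β : ℝ) (hβ : 0 < β) (hβd : 1 < β * d)
    (B13 B14 B23 B24 : ℕ) (h1 : B13 + B14 = d - p) (h2 : B23 + B24 = d - p) :
    Tendsto (fun L : ℝ =>
        (∫ t₁ in (0:ℝ)..L, ∫ t₂ in (0:ℝ)..L, ∫ t₃ in (0:ℝ)..L, ∫ t₄ in (0:ℝ)..L,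
            (if t₁ = t₂ then 1 else min 1 (|t₁ - t₂| ^ (-β))) ^ p
          * (if t₃ = t₄ then 1 else min 1 (|t₃ - t₄| ^ (-β))) ^ p
          * (if t₁ = t₃ then 1 else min 1 (|t₁ - t₃| ^ (-β))) ^ B13
          * (if t₁ = t₄ then 1 else min 1 (|t₁ - t₄| ^ (-β))) ^ B14
          * (if t₂ = t₃ then 1 else min 1 (|t₂ - t₃| ^ (-β))) ^ B23
          * (if t₂ = t₄ then 1 else min 1 (|t₂ - t₄| ^ (-β))) ^ B24) / L ^ 2)
      atTop (nhds 0) :=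
  contractions_vanish_general d p hp hpd β hβ hβd B13 B14 B23 B24 h1 h2
end
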